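/- arXiv:2201.08036 — 5 statements merged into one kernel-verified Lean document; each statement's English description precedes it below -/
import Mathlib

section
/- In any lattice, an element is neutral if and only if it is both distributive and codistributive and cancellable. -/
/-!
Neutrality of `x` says that the upper and lower medians of `x, y, z` agree. Since
`y ⊓ (x ⊔ z)` lies below the upper median and the lower median lies below `x ⊔ (y ⊓ z)`,
a neutral `x` satisfies `y ⊓ (x ⊔ z) ≤ x ⊔ (y ⊓ z)`, and two instances of this give
distributivity; neutrality is self-dual, so codistributivity follows. If `x ⊔ y = x ⊔ z`
and `x ⊓ y = x ⊓ z`, then `y` lies below the upper median and the lower median below `z`,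
so `y ≤ z`. Conversely, for distributive and codistributive `x` both medians have the same
join `x ⊔ (y ⊓ z)` and the same meet `x ⊓ (y ⊔ z)` with `x`, so cancellability makes
them equal.
-/

namespace Lattice

variable {L : Type*} [Lattice L]

def upperMedian (x y z : L) : L := (x ⊔ y) ⊓ (y ⊔ z) ⊓ (z ⊔ x)

def lowerMedian (x y z : L) : L := (x ⊓ y) ⊔ (y ⊓ z) ⊔ (z ⊓ x)

def IsNeutral (x : L) : Prop := ∀ y z, upperMedian x y z = lowerMedian x y z

def IsDistrib (x : L) : Prop := ∀ y z, x ⊔ (y ⊓ z) = (x ⊔ y) ⊓ (x ⊔ z)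

def IsCodistrib (x : L) : Prop := ∀ y z, x ⊓ (y ⊔ z) = (x ⊓ y) ⊔ (x ⊓ z)

def IsCancellable (x : L) : Prop := ∀ y z, x ⊔ y = x ⊔ z → x ⊓ y = x ⊓ z → y = z

open OrderDual

theorem inf_sup_le_upperMedian (x y z : L) : y ⊓ (x ⊔ z) ≤ upperMedian x y z :=
  le_inf (le_inf (le_sup_of_le_right inf_le_left) (le_sup_of_le_left inf_le_left))
    (inf_le_right.trans_eq (sup_comm x z))

theorem lowerMedian_le_sup_inf (x y z : L) : lowerMedian x y z ≤ x ⊔ (y ⊓ z) :=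
  sup_le (sup_le (le_sup_of_le_left inf_le_left) le_sup_right) (le_sup_of_le_left inf_le_right)

theorem sup_lowerMedian (x y z : L) : x ⊔ lowerMedian x y z = x ⊔ (y ⊓ z) :=
  le_antisymm (sup_le le_sup_left (lowerMedian_le_sup_inf x y z))
    (sup_le_sup_left (le_sup_of_le_left le_sup_right) x)

theorem inf_upperMedian (x y z : L) : x ⊓ upperMedian x y z = x ⊓ (y ⊔ z) :=
  sup_lowerMedian (toDual x) (toDual y) (toDual z)

theorem IsDistrib.sup_upperMedian {x : L} (hx : IsDistrib x) (y z : L) :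
    x ⊔ upperMedian x y z = x ⊔ (y ⊓ z) := by
  rw [upperMedian, hx, hx, hx y z, sup_left_idem, sup_comm z x, sup_left_idem,
    inf_eq_left.2 (sup_le_sup_left le_sup_left x)]

theorem IsCodistrib.inf_lowerMedian {x : L} (hx : IsCodistrib x) (y z : L) :
    x ⊓ lowerMedian x y z = x ⊓ (y ⊔ z) :=
  IsDistrib.sup_upperMedian (x := toDual x) hx (toDual y) (toDual z)

theorem IsCancellable.isNeutral {x : L} (hk : IsCancellable x) (hd : IsDistrib x)
    (hc : IsCodistrib x) : IsNeutral x := fun y z =>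
  hk _ _ ((hd.sup_upperMedian y z).trans (sup_lowerMedian x y z).symm)
    ((inf_upperMedian x y z).trans (hc.inf_lowerMedian y z).symm)

namespace IsNeutral

variable {x : L} (hx : IsNeutral x)
include hx

theorem dual : IsNeutral (toDual x) := fun y z => (hx (ofDual y) (ofDual z)).symm

theorem inf_sup_le_sup_inf (y z : L) : y ⊓ (x ⊔ z) ≤ x ⊔ (y ⊓ z) :=
  (inf_sup_le_upperMedian x y z).trans ((hx y z).trans_le (lowerMedian_le_sup_inf x y z))

theorem isDistrib : IsDistrib x := fun y z => by
  refine le_antisymm sup_inf_le ?_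
  calc (x ⊔ y) ⊓ (x ⊔ z) ≤ x ⊔ ((x ⊔ y) ⊓ z) := hx.inf_sup_le_sup_inf _ z
    _ ≤ x ⊔ (x ⊔ (z ⊓ y)) := by
      rw [inf_comm]
      exact sup_le_sup_left (hx.inf_sup_le_sup_inf z y) x
    _ = x ⊔ (y ⊓ z) := by rw [sup_left_idem, inf_comm]

theorem isCodistrib : IsCodistrib x := hx.dual.isDistrib

theorem le_of_sup_eq_of_inf_eq {y z : L} (hs : x ⊔ y = x ⊔ z) (hi : x ⊓ y = x ⊓ z) :
    y ≤ z :=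
  calc y ≤ upperMedian x y z :=
        le_inf (le_inf le_sup_right le_sup_left) (by rw [sup_comm, ← hs]; exact le_sup_right)
    _ = lowerMedian x y z := hx y z
    _ ≤ z := sup_le (sup_le (hi.trans_le inf_le_right) inf_le_right) inf_le_left

theorem isCancellable : IsCancellable x := fun _ _ hs hi =>
  le_antisymm (hx.le_of_sup_eq_of_inf_eq hs hi) (hx.le_of_sup_eq_of_inf_eq hs.symm hi.symm)

end IsNeutral

theorem isNeutral_iff {x : L} : IsNeutral x ↔ IsDistrib x ∧ IsCodistrib x ∧ IsCancellable x :=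
  ⟨fun hx => ⟨hx.isDistrib, hx.isCodistrib, hx.isCancellable⟩,
    fun ⟨hd, hc, hk⟩ => hk.isNeutral hd hc⟩

end Lattice

theorem stmt_5 {L : Type*} [Lattice L] (x : L) :
    (∀ y z : L, (x ⊔ y) ⊓ (y ⊔ z) ⊓ (z ⊔ x) = (x ⊓ y) ⊔ (y ⊓ z) ⊔ (z ⊓ x)) ↔
      ((∀ y z : L, x ⊔ (y ⊓ z) = (x ⊔ y) ⊓ (x ⊔ z)) ∧
       (∀ y z : L, x ⊓ (y ⊔ z) = (x ⊓ y) ⊔ (x ⊓ z)) ∧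
       (∀ y z : L, x ⊔ y = x ⊔ z → x ⊓ y = x ⊓ z → y = z)) :=
  Lattice.isNeutral_iff
end

section
/- For words u, v over an alphabet X, the identity u ≈ v holds in every left regular band monoid (i.e., every monoid satisfying xy = xyx for all elements x, y) under every interpretation of the variables if and only if ini(u) = ini(v). -/
/-!
In a left regular band `m * x = m` implies `m * y * x = m * y`, so once a prefix of a word has
absorbed a letter, every later occurrence of that letter can be deleted; hence every word
evaluates like its `ini`. Conversely, repetition-free lists under "append, then drop letters
already present" form a left regular band monoid, in which the word of singletons evaluates
to exactly its `ini`.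
-/

/-- `ini w` retains only the first occurrence of each letter of the word `w`. -/
def ini {X : Type*} [DecidableEq X] : List X → List X
  | [] => []
  | a :: l => a :: (ini l).filter (fun b => decide (b ≠ a))

section LeftRegularBand

variable {M : Type*} [Monoid M] (hM : ∀ x y : M, x * y = x * y * x)
include hM

theorem mul_self_eq (x : M) : x * x = x := by
  simpa using (hM x 1).symm

theorem mul_mul_eq_of_mul_eq {m x : M} (h : m * x = m) (y : M) : m * y * x = m * y := by
  calc m * y * x = m * x * y * x := by rw [h]
    _ = m * x * y := by rw [mul_assoc m, mul_assoc m, ← hM]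
    _ = m * y := by rw [h]

theorem mul_prod_map_filter_ne {X : Type*} [DecidableEq X] (φ : X → M) (a : X) (l : List X)
    {m : M} (hm : m * φ a = m) :
    m * ((l.filter (fun b => decide (b ≠ a))).map φ).prod = m * (l.map φ).prod := by
  induction l generalizing m with
  | nil => rfl
  | cons b l ih =>
    by_cases hb : b = a
    · subst hb
      simpa [← mul_assoc, hm] using ih hm
    · simpa [hb, ← mul_assoc] using ih (mul_mul_eq_of_mul_eq hM hm (φ b))

theorem mul_prod_map_ini {X : Type*} [DecidableEq X] (φ : X → M) (w : List X) (m : M) :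
    m * ((ini w).map φ).prod = m * (w.map φ).prod := by
  induction w generalizing m with
  | nil => rfl
  | cons a l ih =>
    have hidem : m * φ a * φ a = m * φ a := by rw [mul_assoc, mul_self_eq hM]
    simp only [ini, List.map_cons, List.prod_cons, ← mul_assoc]
    rw [mul_prod_map_filter_ne hM φ a _ hidem, ih]

theorem prod_map_ini {X : Type*} [DecidableEq X] (φ : X → M) (w : List X) :
    ((ini w).map φ).prod = (w.map φ).prod := by
  simpa using mul_prod_map_ini hM φ w 1

end LeftRegularBand

namespace List

variable {X : Type*} [DecidableEq X]

theorem removeAll_eq_nil_of_subset {l m : List X} (h : l ⊆ m) : l.removeAll m = [] :=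
  filter_eq_nil_iff.mpr fun a ha => by simp [h ha]

theorem removeAll_append_removeAll (l m n : List X) :
    (m ++ n.removeAll m).removeAll l = m.removeAll l ++ n.removeAll (l ++ m.removeAll l) := by
  simp only [removeAll, filter_append, filter_filter]
  congr 1
  refine filter_congr fun x _ => ?_
  by_cases hl : x ∈ l <;> by_cases hm : x ∈ m <;> simp [hl, hm]

end List

/-- Its repetition-free lists form the free left regular band monoid on `X`; the other lists are
harmless extra elements. -/
@[ext]
structure FreeLRB (X : Type*) where
  toList : List X

namespace FreeLRB

variable {X : Type*}

instance : One (FreeLRB X) := ⟨⟨[]⟩⟩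

@[simp] theorem toList_one : (1 : FreeLRB X).toList = [] := rfl

def of (a : X) : FreeLRB X := ⟨[a]⟩

variable [DecidableEq X]

instance : Mul (FreeLRB X) := ⟨fun x y => ⟨x.toList ++ y.toList.removeAll x.toList⟩⟩

@[simp] theorem toList_mul (x y : FreeLRB X) :
    (x * y).toList = x.toList ++ y.toList.removeAll x.toList := rfl

instance : Monoid (FreeLRB X) where
  one_mul x := FreeLRB.ext <| by simp
  mul_one x := FreeLRB.ext <| by simp
  mul_assoc x y z := FreeLRB.ext <| by simp [List.removeAll_append_removeAll]

theorem mul_mul_self (x y : FreeLRB X) : x * y = x * y * x :=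
  FreeLRB.ext <| by simp [List.removeAll_eq_nil_of_subset]

theorem prod_map_of (w : List X) : (w.map of).prod = ⟨ini w⟩ := by
  induction w with
  | nil => rfl
  | cons a l ih =>
    rw [List.map_cons, List.prod_cons, ih]
    ext1
    simp [of, ini, List.removeAll]

end FreeLRB

theorem stmt_8 (u v : List ℕ) :
    (∀ (M : Type) [Monoid M], (∀ x y : M, x * y = x * y * x) →
      ∀ φ : ℕ → M, (u.map φ).prod = (v.map φ).prod) ↔ ini u = ini v := by
  constructor
  · intro h
    have h_free := h (FreeLRB ℕ) FreeLRB.mul_mul_self FreeLRB.of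
    rw [FreeLRB.prod_map_of, FreeLRB.prod_map_of] at h_free
    exact congrArg FreeLRB.toList h_free
  · intro h M _ hM φ
    rw [← prod_map_ini hM φ u, ← prod_map_ini hM φ v, h]
end

section
/- Let u and v be words over {x, y} with occ_x(u) = occ_x(v) = occ_y(u) = occ_y(v) = n for some n ≥ 2, and let u', v' be obtained from u, v by swapping x and y. If ξ is an endomorphism of the free monoid over a countable alphabet with ξ(x), ξ(y) nonempty and a, b are words such that a·ξ(s)·b ∈ {u·x, u'·x} for s ∈ {u·x, u'·x, v·x, v'·x}, then a = b is the empty word, ξ(x) = x, and ξ(y) = y. -/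
/-!
All four candidates for `s` and both candidates for `a ξ(s) b` are words over `{x, y}` with
`n + 1` letters `x` and `n` letters `y`. Comparing lengths gives
`|a| + (n + 1) |ξ x| + n |ξ y| + |b| = 2n + 1`, which for nonempty `ξ x`, `ξ y` forces
`a = b = []` and `ξ x`, `ξ y` to be single letters; counting the `x`s and then the `y`s of
`ξ(s)` identifies those letters as `x` and `y`.
-/

/-- The substitution swapping the letters `x = 0` and `y = 1`. -/
def swapxy : ℕ → ℕ := fun c => if c = 0 then 1 else if c = 1 then 0 else c

theorem swapxy_involutive : Function.Involutive swapxy := by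
  intro c
  unfold swapxy
  split_ifs <;> simp_all

theorem count_zero_map_swapxy (u : List ℕ) : (u.map swapxy).count 0 = u.count 1 :=
  List.count_map_of_injective u swapxy swapxy_involutive.injective 1

theorem count_one_map_swapxy (u : List ℕ) : (u.map swapxy).count 1 = u.count 0 :=
  List.count_map_of_injective u swapxy swapxy_involutive.injective 0

theorem forall_mem_map_swapxy {u : List ℕ} (hu : ∀ c ∈ u, c = 0 ∨ c = 1) :
    ∀ c ∈ u.map swapxy, c = 0 ∨ c = 1 := by
  simp only [List.mem_map, forall_exists_index, and_imp, forall_apply_eq_imp_iff₂]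
  intro c hc
  rcases hu c hc with rfl | rfl <;> simp [swapxy]

section ParikhVector

variable {α : Type*} [DecidableEq α] {x y : α} {p q : ℕ} {w : List α}

theorem List.sum_map_eq_count_smul_add_count_smul {M : Type*} [AddCommMonoid M] (f : α → M)
    {l : List α} (hxy : x ≠ y) (hl : ∀ c ∈ l, c = x ∨ c = y) :
    (l.map f).sum = l.count x • f x + l.count y • f y := by
  induction l with
  | nil => simp
  | cons c t ih =>
    rw [List.forall_mem_cons] at hl
    rw [List.map_cons, List.sum_cons, ih hl.2]
    rcases hl.1 with rfl | rfl
    · simp only [List.count_cons_self, List.count_cons_of_ne hxy, add_smul, one_smul]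
      abel
    · simp only [List.count_cons_self, List.count_cons_of_ne hxy.symm, add_smul, one_smul]
      abel

def HasParikhVector (x y : α) (p q : ℕ) (w : List α) : Prop :=
  (∀ c ∈ w, c = x ∨ c = y) ∧ w.count x = p ∧ w.count y = q

namespace HasParikhVector

variable (hxy : x ≠ y) (hw : HasParikhVector x y p q w)
include hxy hw

theorem sum_map {M : Type*} [AddCommMonoid M] (f : α → M) :
    (w.map f).sum = p • f x + q • f y := by
  rw [List.sum_map_eq_count_smul_add_count_smul f hxy hw.1, hw.2.1, hw.2.2]

theorem length_eq : w.length = p + q := by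
  simpa using hw.sum_map hxy (fun _ => (1 : ℕ))

theorem length_flatten_map (ξ : α → List α) :
    (w.map ξ).flatten.length = p * (ξ x).length + q * (ξ y).length := by
  simpa [List.length_flatten, Function.comp_def] using hw.sum_map hxy (fun c => (ξ c).length)

theorem count_flatten_map (ξ : α → List α) (z : α) :
    (w.map ξ).flatten.count z = p * (ξ x).count z + q * (ξ y).count z := by
  simpa [List.count_flatten, Function.comp_def] using hw.sum_map hxy (fun c => (ξ c).count z)

end HasParikhVector

theorem eq_nil_and_eq_singleton_of_append_flatten_map_eq {n : ℕ} (hn : 1 ≤ n) (hxy : x ≠ y)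
    {s : List α} (hs : HasParikhVector x y (n + 1) n s)
    (hw : HasParikhVector x y (n + 1) n w)
    {ξ : α → List α} (hξx : ξ x ≠ []) (hξy : ξ y ≠ []) {a b : List α}
    (h : a ++ (s.map ξ).flatten ++ b = w) :
    a = [] ∧ b = [] ∧ ξ x = [x] ∧ ξ y = [y] := by
  have hlen := congrArg List.length h
  simp only [List.length_append, hs.length_flatten_map hxy, hw.length_eq hxy] at hlen
  have hA := List.length_pos_iff.2 hξx
  have hB := List.length_pos_iff.2 hξy
  have hA1 : (ξ x).length = 1 := by nlinarith
  have hB1 : (ξ y).length = 1 := by nlinarith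
  obtain ⟨rfl, rfl⟩ : a = [] ∧ b = [] := by
    rw [hA1, hB1] at hlen
    rw [← List.length_eq_zero_iff, ← List.length_eq_zero_iff]
    omega
  obtain ⟨p, hp⟩ := List.length_eq_one_iff.1 hA1
  obtain ⟨q, hq⟩ := List.length_eq_one_iff.1 hB1
  simp only [List.nil_append, List.append_nil] at h
  have hcx := hw.2.1
  have hcy := hw.2.2
  rw [← h, hs.count_flatten_map hxy, hp, hq] at hcx hcy
  simp only [List.count_singleton, beq_iff_eq] at hcx hcy
  obtain ⟨rfl, rfl⟩ : p = x ∧ q = y := by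
    split_ifs at hcx hcy <;> simp_all; omega
  exact ⟨rfl, rfl, hp, hq⟩

end ParikhVector

theorem hasParikhVector_of_mem {n : ℕ} {u w : List ℕ} (hu : ∀ c ∈ u, c = 0 ∨ c = 1)
    (hu0 : u.count 0 = n) (hu1 : u.count 1 = n) (hw : w ∈ [u ++ [0], u.map swapxy ++ [0]]) :
    HasParikhVector 0 1 (n + 1) n w := by
  have append_zero : ∀ t : List ℕ, (∀ c ∈ t, c = 0 ∨ c = 1) → ∀ c ∈ t ++ [0], c = 0 ∨ c = 1 :=
    fun t ht c hc => (List.mem_append.1 hc).elim (ht c) (Or.inl ∘ List.eq_of_mem_singleton)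
  simp only [List.mem_cons, List.not_mem_nil, or_false] at hw
  rcases hw with rfl | rfl
  · exact ⟨append_zero u hu, by simp [hu0], by simp [hu1]⟩
  · exact ⟨append_zero _ (forall_mem_map_swapxy hu), by simp [count_zero_map_swapxy, hu1],
      by simp [count_one_map_swapxy, hu0]⟩

theorem stmt_15 (n : ℕ) (hn : 2 ≤ n) (u v : List ℕ)
    (hu : ∀ c ∈ u, c = 0 ∨ c = 1) (hv : ∀ c ∈ v, c = 0 ∨ c = 1)
    (hu0 : u.count 0 = n) (hu1 : u.count 1 = n)
    (hv0 : v.count 0 = n) (hv1 : v.count 1 = n)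
    (ξ : ℕ → List ℕ) (hξx : ξ 0 ≠ []) (hξy : ξ 1 ≠ [])
    (a b s : List ℕ)
    (hs : s ∈ [u ++ [0], u.map swapxy ++ [0], v ++ [0], v.map swapxy ++ [0]])
    (hp : a ++ (s.map ξ).flatten ++ b ∈ [u ++ [0], u.map swapxy ++ [0]]) :
    a = [] ∧ b = [] ∧ ξ 0 = [0] ∧ ξ 1 = [1] := by
  have hs' : HasParikhVector 0 1 (n + 1) n s := by
    have hs : s ∈ [u ++ [0], u.map swapxy ++ [0]] ++ [v ++ [0], v.map swapxy ++ [0]] := hs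
    rcases List.mem_append.1 hs with h | h
    · exact hasParikhVector_of_mem hu hu0 hu1 h
    · exact hasParikhVector_of_mem hv hv0 hv1 h
  exact eq_nil_and_eq_singleton_of_append_flatten_map_eq (by omega) zero_ne_one hs'
    (hasParikhVector_of_mem hu hu0 hu1 hp) hξx hξy rfl
end

section
/- Let u ≈ v be a nontrivial identity in two variables x, y (u ≠ v as words). Then there exist words ū, v̄ in {x, y} with con(ū) = con(v̄) = {x, y} and occ_x(ū) = occ_x(v̄) = occ_y(ū) = occ_y(v̄) = n for some n ≥ 2, such that ū ≈ v̄ is nontrivial and is a consequence of u ≈ v together with the identities x^{occ_x(u)+1} ≈ x^{occ_x(v)+1} and x^{occ_y(u)+1} ≈ x^{occ_y(v)+1}. -/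
/-!
If `u` and `v` contain each letter equally often, append the same block `x^k y^l` to both
sides: this balances the occurrence counts and stays a nontrivial consequence of `u ≈ v`.
Otherwise some letter, say `x`, has `p = occ_x(u) ≠ q = occ_x(v)`, and then
`x^(p+1) y^(p+q+2) x^(q+1) ≈ x^(q+1) y^(p+q+2) x^(p+1)` is a balanced, nontrivial
consequence of `x^(p+1) ≈ x^(q+1)` alone.
-/

open List

namespace List

variable {α : Type*}

theorem eq_of_replicate_append_cons_eq {c d : α} (hdc : d ≠ c) :
    ∀ {a b : ℕ} {r s : List α}, replicate a c ++ d :: r = replicate b c ++ d :: s → a = b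
  | 0, 0, _, _, _ => rfl
  | 0, _ + 1, _, _, h => absurd (cons.inj h).1 hdc
  | _ + 1, 0, _, _, h => absurd (cons.inj h).1.symm hdc
  | _ + 1, _ + 1, _, _, h => congrArg (· + 1) (eq_of_replicate_append_cons_eq hdc (cons.inj h).2)

end List

namespace Word

variable {α : Type*} {c d : α}

def sandwich (c d : α) (p q : ℕ) : List α :=
  replicate (p + 1) c ++ replicate (p + q + 2) d ++ replicate (q + 1) c

theorem sandwich_ne_sandwich_swap (hcd : c ≠ d) {p q : ℕ} (hpq : p ≠ q) :
    sandwich c d p q ≠ sandwich c d q p := by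
  intro h
  have hsplit : ∀ m, replicate (m + q + 2) d = d :: replicate (m + q + 1) d := fun _ => rfl
  rw [sandwich, sandwich, add_comm q p, append_assoc, append_assoc, hsplit, cons_append,
    cons_append] at h
  exact hpq (Nat.succ_injective (eq_of_replicate_append_cons_eq hcd.symm h))

theorem prod_map_sandwich_eq {M : Type*} [Monoid M] {p q : ℕ}
    (hpow : ∀ a : M, a ^ (p + 1) = a ^ (q + 1)) (φ : α → M) :
    ((sandwich c d p q).map φ).prod = ((sandwich c d q p).map φ).prod := by
  simp only [sandwich, map_append, prod_append, map_replicate, prod_replicate, hpow (φ c),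
    add_comm p q]

variable [DecidableEq α]

theorem count_sandwich_left (hcd : c ≠ d) (p q : ℕ) :
    (sandwich c d p q).count c = p + q + 2 := by
  simp [sandwich, count_replicate, hcd.symm]
  omega

theorem count_sandwich_right (hcd : c ≠ d) (p q : ℕ) :
    (sandwich c d p q).count d = p + q + 2 := by
  simp [sandwich, count_replicate, hcd]

def balance (c d : α) (w : List α) : List α :=
  w ++ replicate (w.count d + 2) c ++ replicate (w.count c + 2) d

theorem count_balance_left (hcd : c ≠ d) (w : List α) :
    (balance c d w).count c = w.count c + w.count d + 2 := by
  simp [balance, count_replicate, hcd.symm]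
  omega

theorem count_balance_right (hcd : c ≠ d) (w : List α) :
    (balance c d w).count d = w.count c + w.count d + 2 := by
  simp [balance, count_replicate, hcd]
  omega

theorem eq_of_balance_eq {u v : List α} (hc : u.count c = v.count c)
    (hd : u.count d = v.count d) (h : balance c d u = balance c d v) : u = v := by
  rw [balance, balance, hc, hd, append_assoc, append_assoc] at h
  exact append_cancel_right h

theorem prod_map_balance_eq {M : Type*} [Monoid M] {u v : List α} (hc : u.count c = v.count c)
    (hd : u.count d = v.count d) {φ : α → M} (h : (u.map φ).prod = (v.map φ).prod) :
    ((balance c d u).map φ).prod = ((balance c d v).map φ).prod := by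
  simp only [balance, hc, hd, map_append, prod_append, h]

end Word

open Word

theorem stmt_16 (u v : List (Fin 2)) (huv : u ≠ v) :
    ∃ (ub vb : List (Fin 2)) (n : ℕ), 2 ≤ n ∧
      ub.count 0 = n ∧ ub.count 1 = n ∧ vb.count 0 = n ∧ vb.count 1 = n ∧
      ub ≠ vb ∧
      ∀ (M : Type) [Monoid M],
        (∀ φ : Fin 2 → M, (u.map φ).prod = (v.map φ).prod) →
        (∀ a : M, a ^ (u.count 0 + 1) = a ^ (v.count 0 + 1)) →
        (∀ a : M, a ^ (u.count 1 + 1) = a ^ (v.count 1 + 1)) →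
        ∀ φ : Fin 2 → M, (ub.map φ).prod = (vb.map φ).prod := by
  have h01 : (0 : Fin 2) ≠ 1 := by decide
  by_cases h0 : u.count 0 = v.count 0
  · by_cases h1 : u.count 1 = v.count 1
    · refine ⟨balance 0 1 u, balance 0 1 v, u.count 0 + u.count 1 + 2, by omega,
        count_balance_left h01 u, count_balance_right h01 u, ?_, ?_,
        fun h => huv (eq_of_balance_eq h0 h1 h),
        fun M _ hid _ _ φ => prod_map_balance_eq h0 h1 (hid φ)⟩
      · rw [count_balance_left h01, h0, h1]
      · rw [count_balance_right h01, h0, h1]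
    · refine ⟨sandwich 1 0 (u.count 1) (v.count 1), sandwich 1 0 (v.count 1) (u.count 1),
        u.count 1 + v.count 1 + 2, by omega, count_sandwich_right h01.symm _ _,
        count_sandwich_left h01.symm _ _, ?_, ?_, sandwich_ne_sandwich_swap h01.symm h1,
        fun M _ _ _ hpow φ => prod_map_sandwich_eq hpow φ⟩
      · rw [count_sandwich_right h01.symm]; omega
      · rw [count_sandwich_left h01.symm]; omega
  · refine ⟨sandwich 0 1 (u.count 0) (v.count 0), sandwich 0 1 (v.count 0) (u.count 0),
      u.count 0 + v.count 0 + 2, by omega, count_sandwich_left h01 _ _,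
      count_sandwich_right h01 _ _, ?_, ?_, sandwich_ne_sandwich_swap h01 h0,
      fun M _ _ hpow _ φ => prod_map_sandwich_eq hpow φ⟩
    · rw [count_sandwich_left h01]; omega
    · rw [count_sandwich_right h01]; omega
end

section
/- Let k ≥ 2 and let u be a word over {x, y} with occ_x(u) = occ_y(u) = k such that x^k is not a subword of u. Consider words over the alphabet {x, y, t}. If ξ is an endomorphism of the free monoid with ξ(x), ξ(t) nonempty and ξ(y) the empty word, then a·ξ(x t u)·b ≠ x t u and a·ξ(x t u)·b ≠ t x u for all words a, b. -/
/-!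
With `x, y, t` encoded as `0, 1, 2`: since `ξ y` is empty, `ξ (x t u) = ξ x ξ t (ξ x)^k`.
Comparing lengths with `|x t u| = 2k + 2` forces `ξ x` to be a single letter `c`, and as `ξ t` is
nonempty the block `c^k` then lies inside `u`. So `c` is `x` or `y`: the first is excluded by
`x^k` not being a factor of `u`, the second because the image would contain `k + 1` letters `y`
while `x t u` and `t x u` contain only `k`.
-/

namespace List

variable {α β : Type*}

theorem length_eq_count_add_count [DecidableEq α] {x y : α} (hxy : x ≠ y) {u : List α}
    (hu : ∀ c ∈ u, c = x ∨ c = y) : u.length = u.count x + u.count y := by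
  induction u with
  | nil => rfl
  | cons c u ih =>
    have hrest := ih fun d hd => hu d (mem_cons_of_mem _ hd)
    rcases hu c mem_cons_self with rfl | rfl <;>
      simp only [length_cons, count_cons_self, count_cons_of_ne, ne_eq, hxy, hxy.symm,
        not_false_eq_true, hrest] <;> omega

theorem flatten_map_eq_flatten_replicate [DecidableEq α] (ξ : α → List β) {x y : α}
    (hy : ξ y = []) {u : List α} (hu : ∀ c ∈ u, c = x ∨ c = y) :
    (u.map ξ).flatten = (replicate (u.count x) (ξ x)).flatten := by
  induction u with
  | nil => rfl
  | cons c u ih =>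
    have hrest := ih fun d hd => hu d (mem_cons_of_mem _ hd)
    rcases hu c mem_cons_self with rfl | rfl
    · simp [hrest, replicate_succ]
    · by_cases hxy : c = x
      · subst hxy
        simp [hy, hrest, replicate_succ]
      · simp [hy, hrest, hxy]

theorem IsInfix.of_append_eq_append {a s b p u : List α} (h : a ++ s ++ b = p ++ u)
    (hp : p.length ≤ a.length) : s <:+: u := by
  rw [append_assoc, append_eq_append_iff] at h
  rcases h with ⟨a', rfl, h⟩ | ⟨a', rfl, rfl⟩
  · obtain rfl : a' = [] := by simpa using hp
    exact ⟨[], b, by simp [h]⟩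
  · exact ⟨a', b, by simp⟩

theorem append_append_flatten_replicate_ne [DecidableEq α] {x y : α} {k : ℕ} (hk : 1 ≤ k)
    {u : List α} (hu : ∀ c ∈ u, c = x ∨ c = y) (hlen : u.length = 2 * k) (hy : u.count y = k)
    (hfree : ¬ replicate k x <:+: u) {p v w : List α} (hp : p.length = 2)
    (hpy : p.count y = 0) (hv : v ≠ []) (hw : w ≠ []) (a b : List α) :
    a ++ v ++ w ++ (replicate k v).flatten ++ b ≠ p ++ u := by
  intro h
  have hv1 : v.length = 1 := by
    have hlen' := congrArg length h
    simp only [length_append, length_flatten, map_replicate, sum_replicate, smul_eq_mul,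
      hp, hlen] at hlen'
    have := length_pos_iff.2 hv
    have := length_pos_iff.2 hw
    nlinarith
  obtain ⟨c, rfl⟩ := length_eq_one_iff.1 hv1
  rw [flatten_replicate_singleton] at h
  have hinfix : replicate k c <:+: u := by
    refine IsInfix.of_append_eq_append (a := a ++ [c] ++ w) (by simpa using h) ?_
    have := length_pos_iff.2 hw
    simp only [length_append, length_singleton, hp]
    omega
  have hc : c ∈ u := hinfix.subset (mem_replicate.2 ⟨by omega, rfl⟩)
  rcases hu c hc with rfl | rfl
  · exact hfree hinfix
  · have hcount := congrArg (count c) h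
    simp only [append_assoc, cons_append, nil_append, count_append, count_cons_self,
      count_replicate_self, hpy, hy, zero_add] at hcount
    omega

end List

theorem stmt_18 (k : ℕ) (hk : 2 ≤ k) (u : List ℕ)
    (hu : ∀ c ∈ u, c = 0 ∨ c = 1)
    (h0 : u.count 0 = k) (h1 : u.count 1 = k)
    (hnf : ∀ a b : List ℕ, u ≠ a ++ List.replicate k 0 ++ b)
    (ξ : ℕ → List ℕ) (hξx : ξ 0 ≠ []) (hξt : ξ 2 ≠ []) (hξy : ξ 1 = [])
    (a b : List ℕ) :
    a ++ ((([0, 2] ++ u)).map ξ).flatten ++ b ≠ [0, 2] ++ u ∧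
    a ++ ((([0, 2] ++ u)).map ξ).flatten ++ b ≠ [2, 0] ++ u := by
  have hlen : u.length = 2 * k := by
    rw [List.length_eq_count_add_count zero_ne_one hu, h0, h1]
    ring
  have hfree : ¬ List.replicate k 0 <:+: u := fun ⟨s, t, h⟩ => hnf s t h.symm
  have himage : (([0, 2] ++ u).map ξ).flatten =
      ξ 0 ++ ξ 2 ++ (List.replicate k (ξ 0)).flatten := by
    simp [List.flatten_map_eq_flatten_replicate ξ hξy hu, h0]
  have hk1 : 1 ≤ k := by omega
  simp only [himage, ← List.append_assoc]
  exact ⟨List.append_append_flatten_replicate_ne hk1 hu hlen h1 hfree rfl rfl hξx hξt a b,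
    List.append_append_flatten_replicate_ne hk1 hu hlen h1 hfree rfl rfl hξx hξt a b⟩
end
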